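/- Let U₁ and Y be real Hilbert spaces, H : U₁ → Y a continuous linear map with Hilbert adjoint H*, c ∈ Y, and α > 0. Suppose ξ* ∈ Y satisfies the variational inequality ⟨H H* ξ* − c, ξ̂ − ξ*⟩ + α(‖ξ̂‖ − ‖ξ*‖) ≥ 0 for all ξ̂ ∈ Y. Then u* = H*ξ* is a minimizer of the leader's problem: ‖H u* − c‖ ≤ α and (1/2)‖u*‖² ≤ (1/2)‖u‖² for every u ∈ U₁ with ‖H u − c‖ ≤ α. -/
import Mathlib


open scoped RealInnerProductSpace

/-- Hilbert-space abstraction of Proposition 2: if `ξ*` satisfies the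
variational inequality (33), then `u* = H*ξ*` solves the leader's problem:
it is feasible (`‖H u* − c‖ ≤ α`) and minimizes `(1/2)‖u‖²` over the feasible
set `{u : ‖H u − c‖ ≤ α}`. -/
theorem leader_optimality_from_variational_inequality
    {U₁ Y : Type*}
    [NormedAddCommGroup U₁] [InnerProductSpace ℝ U₁] [CompleteSpace U₁]
    [NormedAddCommGroup Y] [InnerProductSpace ℝ Y] [CompleteSpace Y]
    (H : U₁ →L[ℝ] Y) (c : Y) (α : ℝ) (hα : 0 < α) (ξ : Y)
    (hVI : ∀ η : Y,
      ⟪H (ContinuousLinearMap.adjoint H ξ) - c, η - ξ⟫ + α * (‖η‖ - ‖ξ‖) ≥ 0) :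
    ‖H (ContinuousLinearMap.adjoint H ξ) - c‖ ≤ α ∧
    ∀ u : U₁, ‖H u - c‖ ≤ α →
      (1/2) * ‖ContinuousLinearMap.adjoint H ξ‖ ^ 2 ≤ (1/2) * ‖u‖ ^ 2 := by
  set u₀ := ContinuousLinearMap.adjoint H ξ with hu₀
  set d := H u₀ - c with hd
  -- key identity : ⟪d, ξ⟫ = -α * ‖ξ‖
  have key : ⟪d, ξ⟫ = -(α * ‖ξ‖) := by
    have h1 := hVI ((2 : ℝ) • ξ)
    have h2 := hVI 0
    have e1 : (2 : ℝ) • ξ - ξ = ξ := by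
      rw [two_smul]; abel
    rw [e1, norm_smul] at h1
    rw [zero_sub, inner_neg_right, norm_zero] at h2
    simp only [Real.norm_ofNat] at h1
    nlinarith [h1, h2]
  -- feasibility
  have feas : ‖d‖ ≤ α := by
    have h := hVI (ξ - d)
    have e : ξ - d - ξ = -d := by abel
    rw [e, inner_neg_right, real_inner_self_eq_norm_sq] at h
    have htri : ‖ξ - d‖ - ‖ξ‖ ≤ ‖d‖ := by
      have := norm_sub_le ξ d
      linarith
    nlinarith [h, htri, hα.le, norm_nonneg d,
      mul_le_mul_of_nonneg_left htri hα.le]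
  refine ⟨feas, fun u hu => ?_⟩
  -- ‖u₀‖² = ⟪ξ, H u₀⟫
  have hn : ‖u₀‖ ^ 2 = ⟪ξ, H u₀⟫ := by
    rw [← real_inner_self_eq_norm_sq]
    nth_rewrite 1 [hu₀]
    rw [ContinuousLinearMap.adjoint_inner_left]
  have hXu : ⟪u₀, u⟫ = ⟪ξ, H u⟫ := by
    rw [hu₀, ContinuousLinearMap.adjoint_inner_left]
  -- ⟪ξ, H u - c⟫ ≥ -α‖ξ‖
  have hcs : -(α * ‖ξ‖) ≤ ⟪ξ, H u - c⟫ := by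
    have h1 : |⟪ξ, H u - c⟫| ≤ ‖ξ‖ * ‖H u - c‖ := abs_real_inner_le_norm _ _
    have h2 : ‖ξ‖ * ‖H u - c‖ ≤ ‖ξ‖ * α :=
      mul_le_mul_of_nonneg_left hu (norm_nonneg ξ)
    have := neg_abs_le ⟪ξ, H u - c⟫
    nlinarith
  -- ‖u₀‖² ≤ ⟪u₀, u⟫
  have hle : ‖u₀‖ ^ 2 ≤ ⟪u₀, u⟫ := by
    have e1 : ⟪ξ, H u₀⟫ = ⟪d, ξ⟫ + ⟪ξ, c⟫ := by
      rw [hd, real_inner_comm, inner_sub_left, real_inner_comm c ξ]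
      ring
    have e2 : ⟪ξ, H u⟫ = ⟪ξ, H u - c⟫ + ⟪ξ, c⟫ := by
      rw [inner_sub_right]; ring
    rw [hn, hXu, e1, e2, key]
    linarith
  have hcs2 : ⟪u₀, u⟫ ≤ ‖u₀‖ * ‖u‖ := real_inner_le_norm _ _
  have : ‖u₀‖ ^ 2 ≤ ‖u₀‖ * ‖u‖ := le_trans hle hcs2
  nlinarith [norm_nonneg u₀, norm_nonneg u, sq_nonneg (‖u₀‖ - ‖u‖)]
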